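/- arXiv:1809.07534 — 2 statements merged into one kernel-verified Lean document; each statement's English description precedes it below -/
import Mathlib

section
/- Let ℓ ≥ 2 and let A_x be the graph obtained as the union of: a copy of the backbone-path B_ℓ; one additional vertex x ∉ V(B_ℓ) together with the edge {w_{1,2},w_{1,3}} and the four edges {w_{1,i},x} for i ∈ {1,2,3,4}; and, for each 1 ≤ i ≤ ℓ−1, a square-path U_i connecting w_iᵇ to w_{i+1}ᵃ, where the U_i are pairwise vertex-disjoint, each U_i intersects V(B_ℓ) exactly in the four vertices w_{i,3}, w_{i,4}, w_{i+1,1}, w_{i+1,2}, and no U_i contains x. Then A_x is a (w₁ᵃ, w_ℓᵇ, {x})-absorber, i.e., for every X' ⊆ {x} there is a square-path in A_x connecting w₁ᵃ = (w_{1,1},w_{1,2}) to w_ℓᵇ = (w_{ℓ,3},w_{ℓ,4}) whose vertex set is exactly V(A_x) \ X'. -/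
/-- The `ℓ`-square-path `P²_ℓ` on vertices `0, …, ℓ-1`: vertices at distance at most 2 are
adjacent. -/
def squarePath (ℓ : ℕ) : SimpleGraph (Fin ℓ) :=
  SimpleGraph.fromRel fun i j => i.val < j.val ∧ j.val ≤ i.val + 2

/-- A square-path in `G` connecting `(a₁, a₂)` to `(b₁, b₂)` with vertex set `S` and edge set
`E`: an embedding `g` of `P²_ℓ` into `G` (for some `ℓ ≥ 4`) whose first two vertices are
`a₁, a₂`, whose last two vertices are `b₁, b₂`, whose image is `S` and whose image edge set
is `E`. -/
def IsSquarePathConn {V : Type*} (G : SimpleGraph V) (a₁ a₂ b₁ b₂ : V)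
    (S : Set V) (E : Set (Sym2 V)) : Prop :=
  ∃ ℓ : ℕ, ∃ h : 4 ≤ ℓ, ∃ g : Fin ℓ → V, Function.Injective g ∧
    (∀ i j : Fin ℓ, (squarePath ℓ).Adj i j → G.Adj (g i) (g j)) ∧
    g ⟨0, by omega⟩ = a₁ ∧ g ⟨1, by omega⟩ = a₂ ∧
    g ⟨ℓ - 2, by omega⟩ = b₁ ∧ g ⟨ℓ - 1, by omega⟩ = b₂ ∧
    Set.range g = S ∧ Sym2.map g '' (squarePath ℓ).edgeSet = E

/-- The five edges making `(x₁, x₂, x₃, x₄)` a 4-square-path. -/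
def sq4 {V : Type*} (x₁ x₂ x₃ x₄ : V) : Set (Sym2 V) :=
  {s(x₁, x₂), s(x₂, x₃), s(x₃, x₄), s(x₁, x₃), s(x₂, x₄)}

/-- The edge set of a copy of the `ℓ`-backbone-path `B_ℓ` with vertices `w i j`
(`1 ≤ i ≤ ℓ`, `1 ≤ j ≤ 4`). -/
def backboneEdgeSet {V : Type*} (ℓ : ℕ) (w : ℕ → ℕ → V) : Set (Sym2 V) :=
  {s(w 1 1, w 1 2), s(w 1 3, w 1 4)} ∪
  (⋃ i ∈ Set.Icc 2 ℓ, sq4 (w i 1) (w i 2) (w i 3) (w i 4)) ∪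
  sq4 (w 1 1) (w 1 2) (w 2 2) (w 2 1) ∪
  (⋃ i ∈ Set.Icc 1 (ℓ - 2), sq4 (w i 4) (w i 3) (w (i + 2) 2) (w (i + 2) 1)) ∪
  sq4 (w (ℓ - 1) 4) (w (ℓ - 1) 3) (w ℓ 3) (w ℓ 4)

/-! Traverse the paths `U_i` one after another. Through `x`, the walk is
`w₁₁, w₁₂, x, U₁, U₂, …, U_{ℓ-1}, w_{ℓ3}, w_{ℓ4}`; consecutive `U_i, U_{i+1}` are glued along the
4-square-path `w_{i+1}` of the backbone. Avoiding `x`, the walk is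
`w₁₁, w₁₂, U₁⁻¹, …, U_{ℓ-1}⁻¹, w_{ℓ3}, w_{ℓ4}`, glued along the cross square-paths
`(w_{i4}, w_{i3}, w_{i+2,2}, w_{i+2,1})`, with the first and last 4-square-paths of `B_ℓ` at the
ends. Every backbone vertex other than `w₁₁, w₁₂, w_{ℓ3}, w_{ℓ4}` lies on some `U_i`, so both walks
cover the right vertex set.

Square-paths are handled as lists in which every vertex is adjacent to the next two; two such
lists concatenate to another one as soon as the last two vertices of the first and the first two
of the second form a 4-square-path. -/

theorem List.exists_eq_cons_cons_getElem {α : Type*} {l : List α} (h : 2 ≤ l.length) :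
    ∃ s, l = l[0] :: l[1] :: s := by
  match l, h with
  | a :: b :: s, _ => exact ⟨s, rfl⟩

theorem List.exists_eq_append_getElem_pair {α : Type*} {l : List α} (h : 2 ≤ l.length) :
    ∃ p, l = p ++ [l[l.length - 2], l[l.length - 1]] := by
  obtain ⟨s, hs⟩ := l.reverse.exists_eq_cons_cons_getElem (by simpa)
  refine ⟨s.reverse, ?_⟩
  conv_lhs => rw [← l.reverse_reverse, hs]
  simp [Nat.sub_sub]

theorem List.nodup_flatten_map_range' {α : Type*} {Q : ℕ → List α} {n : ℕ}
    (hQ : ∀ i ∈ Set.Icc 1 n, (Q i).Nodup)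
    (hdisj : ∀ i ∈ Set.Icc 1 n, ∀ j ∈ Set.Icc 1 n, i ≠ j → (Q i).Disjoint (Q j)) :
    ((List.range' 1 n).map Q).flatten.Nodup := by
  rw [List.nodup_flatten, List.pairwise_map]
  refine ⟨fun l hl => ?_, ?_⟩
  · obtain ⟨i, hi, rfl⟩ := List.mem_map.1 hl
    rw [List.mem_range'_1] at hi
    exact hQ i ⟨hi.1, by omega⟩
  refine (List.nodup_range' (s := 1) (n := n)).imp_of_mem fun {i j} hi hj hij => ?_
  simp only [List.mem_range'_1] at hi hj
  exact hdisj i ⟨hi.1, by omega⟩ j ⟨hj.1, by omega⟩ hij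

namespace SimpleGraph

variable {V : Type*} (G : SimpleGraph V)

def IsSquareWalk : List V → Prop
  | [] => True
  | a :: l => (∀ b ∈ l.take 2, G.Adj a b) ∧ IsSquareWalk l

def IsSquareWalkBetween (a₁ a₂ b₁ b₂ : V) (l : List V) : Prop :=
  G.IsSquareWalk l ∧ (∃ s, l = a₁ :: a₂ :: s) ∧ ∃ p, l = p ++ [b₁, b₂]

variable {G}

@[simp]
theorem isSquareWalk_nil : G.IsSquareWalk [] := trivial

@[simp]
theorem isSquareWalk_cons {a : V} {l : List V} :
    G.IsSquareWalk (a :: l) ↔ (∀ b ∈ l.take 2, G.Adj a b) ∧ G.IsSquareWalk l := Iff.rfl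

theorem isSquareWalk_iff_getElem {l : List V} :
    G.IsSquareWalk l ↔
      ∀ i j (_ : i < j), j ≤ i + 2 → ∀ hj : j < l.length, G.Adj (l[i]'(by omega)) l[j] := by
  induction l with
  | nil => simp
  | cons a l ih =>
    rw [isSquareWalk_cons, ih]
    constructor
    · rintro ⟨ha, hl⟩ (_ | i) (_ | j) hij hji hj
      · omega
      · exact ha _ (List.mem_take_iff_getElem.2 ⟨j, by simp at hj ⊢; omega, rfl⟩)
      · omega
      · exact hl i j (by omega) (by omega) (by simpa using hj)
    · intro h
      refine ⟨fun b hb => ?_,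
        fun i j hij hji hj => h (i + 1) (j + 1) (by omega) (by omega) (by simpa)⟩
      obtain ⟨k, hk, rfl⟩ := List.mem_take_iff_getElem.1 hb
      exact h 0 (k + 1) (by omega) (by omega) (by simp; omega)

theorem IsSquareWalk.reverse {l : List V} (h : G.IsSquareWalk l) : G.IsSquareWalk l.reverse := by
  rw [isSquareWalk_iff_getElem] at h ⊢
  intro i j hij hji hj
  simp only [List.length_reverse] at hj
  simp only [List.getElem_reverse]
  exact (h _ _ (by omega) (by omega) (by omega)).symm

theorem IsSquareWalk.append_cons_cons {l₁ l₂ : List V} {a b c d : V}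
    (h₁ : G.IsSquareWalk (l₁ ++ [a, b])) (h₂ : G.IsSquareWalk (c :: d :: l₂))
    (h : G.IsSquareWalk [a, b, c, d]) : G.IsSquareWalk (l₁ ++ a :: b :: c :: d :: l₂) := by
  induction l₁ with
  | nil => simp_all
  | cons y l₁ ih =>
    rw [List.cons_append, isSquareWalk_cons] at h₁ ⊢
    refine ⟨?_, ih h₁.2⟩
    rw [show l₁ ++ a :: b :: c :: d :: l₂ = (l₁ ++ [a, b]) ++ c :: d :: l₂ by simp,
      List.take_append_of_le_length (by simp)]
    exact h₁.1

theorem isSquareWalk_of_sq4_subset {a b c d : V} (h : sq4 a b c d ⊆ G.edgeSet) :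
    G.IsSquareWalk [a, b, c, d] := by
  simp only [sq4, Set.insert_subset_iff, Set.singleton_subset_iff, mem_edgeSet] at h
  simp [h]

theorem isSquareWalkBetween_pair {a b : V} (h : G.Adj a b) :
    G.IsSquareWalkBetween a b a b [a, b] :=
  ⟨by simpa using h, ⟨[], rfl⟩, [], rfl⟩

theorem IsSquareWalkBetween.append {a₁ a₂ b₁ b₂ c₁ c₂ d₁ d₂ : V} {l₁ l₂ : List V}
    (h₁ : G.IsSquareWalkBetween a₁ a₂ b₁ b₂ l₁) (h₂ : G.IsSquareWalkBetween c₁ c₂ d₁ d₂ l₂)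
    (h : G.IsSquareWalk [b₁, b₂, c₁, c₂]) : G.IsSquareWalkBetween a₁ a₂ d₁ d₂ (l₁ ++ l₂) := by
  obtain ⟨hw₁, ⟨s₁, hs₁⟩, p₁, hp₁⟩ := h₁
  obtain ⟨hw₂, ⟨s₂, hs₂⟩, p₂, hp₂⟩ := h₂
  refine ⟨?_, ⟨s₁ ++ l₂, by simp [hs₁]⟩, l₁ ++ p₂, by simp [hp₂]⟩
  rw [hp₁] at hw₁
  rw [hs₂] at hw₂
  simpa [hp₁, hs₂] using hw₁.append_cons_cons hw₂ h

theorem IsSquareWalkBetween.reverse {a₁ a₂ b₁ b₂ : V} {l : List V}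
    (h : G.IsSquareWalkBetween a₁ a₂ b₁ b₂ l) : G.IsSquareWalkBetween b₂ b₁ a₂ a₁ l.reverse := by
  obtain ⟨hw, ⟨s, hs⟩, p, hp⟩ := h
  exact ⟨hw.reverse, ⟨p.reverse, by simp [hp]⟩, s.reverse, by simp [hs]⟩

theorem isSquareWalkBetween_flatten_map_range' {P : ℕ → List V} {s₁ s₂ e₁ e₂ : ℕ → V}
    {n : ℕ} (hn : 1 ≤ n)
    (hP : ∀ i ∈ Set.Icc 1 n, G.IsSquareWalkBetween (s₁ i) (s₂ i) (e₁ i) (e₂ i) (P i))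
    (hJ : ∀ i ∈ Set.Ico 1 n, G.IsSquareWalk [e₁ i, e₂ i, s₁ (i + 1), s₂ (i + 1)]) :
    G.IsSquareWalkBetween (s₁ 1) (s₂ 1) (e₁ n) (e₂ n) ((List.range' 1 n).map P).flatten := by
  induction n, hn using Nat.le_induction with
  | base => simpa using hP 1 ⟨le_rfl, le_rfl⟩
  | succ n hn ih =>
    rw [List.range'_1_concat, List.map_append, List.flatten_append, add_comm 1 n]
    simpa using (ih (fun i hi => hP i ⟨hi.1, by grind⟩) fun i hi => hJ i ⟨hi.1, by grind⟩).append
      (hP (n + 1) ⟨by omega, le_rfl⟩) (hJ n ⟨hn, by omega⟩)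

end SimpleGraph

open SimpleGraph

theorem exists_isSquarePathConn_iff {V : Type*} {G : SimpleGraph V} {a₁ a₂ b₁ b₂ : V}
    {S : Set V} :
    (∃ E, IsSquarePathConn G a₁ a₂ b₁ b₂ S E) ↔
      ∃ l : List V, G.IsSquareWalkBetween a₁ a₂ b₁ b₂ l ∧ 4 ≤ l.length ∧ l.Nodup ∧
        {v | v ∈ l} = S := by
  constructor
  · rintro ⟨E, n, hn, g, hg, hadj, h₀, h₁, h₂, h₃, rfl, -⟩
    have hlen : (List.ofFn g).length = n := List.length_ofFn
    obtain ⟨s, hs⟩ := (List.ofFn g).exists_eq_cons_cons_getElem (by omega)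
    obtain ⟨p, hp⟩ := (List.ofFn g).exists_eq_append_getElem_pair (by omega)
    refine ⟨List.ofFn g, ⟨?_, ⟨s, ?_⟩, p, ?_⟩, by omega, List.nodup_ofFn.2 hg, by ext; simp⟩
    · rw [isSquareWalk_iff_getElem]
      intro i j hij hji hj
      simp only [List.getElem_ofFn]
      exact hadj _ _ (by simp [squarePath, Fin.ext_iff]; omega)
    · simpa [h₀, h₁] using hs
    · simpa [hlen, h₂, h₃] using hp
  · rintro ⟨l, ⟨hw, ⟨s, hs⟩, p, hp⟩, hlen, hnd, rfl⟩
    refine ⟨_, l.length, hlen, l.get, List.nodup_iff_injective_get.1 hnd, ?_, ?_, ?_, ?_, ?_,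
      Set.range_list_get l, rfl⟩
    · intro i j hij
      rw [squarePath, fromRel_adj] at hij
      rw [isSquareWalk_iff_getElem] at hw
      simp only [List.get_eq_getElem]
      rcases hij.2 with hij | hij
      · exact hw _ _ hij.1 hij.2 _
      · exact (hw _ _ hij.1 hij.2 _).symm
    · simp [hs]
    · simp [hs]
    · simp [hp]
    · simp [hp]

section Backbone

variable {V : Type*} {ℓ : ℕ} {w : ℕ → ℕ → V}

theorem sq4_row_subset_backboneEdgeSet {i : ℕ} (hi : i ∈ Set.Icc 2 ℓ) :
    sq4 (w i 1) (w i 2) (w i 3) (w i 4) ⊆ backboneEdgeSet ℓ w := fun _ he =>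
  Or.inl <| Or.inl <| Or.inl <| Or.inr <| Set.mem_biUnion hi he

theorem sq4_first_subset_backboneEdgeSet :
    sq4 (w 1 1) (w 1 2) (w 2 2) (w 2 1) ⊆ backboneEdgeSet ℓ w := fun _ he =>
  Or.inl <| Or.inl <| Or.inr he

theorem sq4_cross_subset_backboneEdgeSet {i : ℕ} (hi : i ∈ Set.Icc 1 (ℓ - 2)) :
    sq4 (w i 4) (w i 3) (w (i + 2) 2) (w (i + 2) 1) ⊆ backboneEdgeSet ℓ w := fun _ he =>
  Or.inl <| Or.inr <| Set.mem_biUnion hi he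

theorem sq4_last_subset_backboneEdgeSet :
    sq4 (w (ℓ - 1) 4) (w (ℓ - 1) 3) (w ℓ 3) (w ℓ 4) ⊆ backboneEdgeSet ℓ w := fun _ he =>
  Or.inr he

theorem mem_backboneEdgeSet_first_pair : s(w 1 1, w 1 2) ∈ backboneEdgeSet ℓ w :=
  Or.inl <| Or.inl <| Or.inl <| Or.inl <| Or.inl rfl

theorem mem_backboneEdgeSet_second_pair : s(w 1 3, w 1 4) ∈ backboneEdgeSet ℓ w :=
  Or.inl <| Or.inl <| Or.inl <| Or.inl <| Or.inr rfl

def backboneVertexSet (ℓ : ℕ) (w : ℕ → ℕ → V) : Set V :=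
  {v | ∃ i ∈ Set.Icc 1 ℓ, ∃ j ∈ Set.Icc 1 4, v = w i j}

/-- `A` is the graph `A_x` built on the backbone `w`; `SU i` and `EU i` are the vertex and edge
sets of the square-path `U_i`. -/
structure IsAbsorberGraph (ℓ : ℕ) (w : ℕ → ℕ → V) (x : V) (A : SimpleGraph V)
    (SU : ℕ → Set V) (EU : ℕ → Set (Sym2 V)) : Prop where
  two_le : 2 ≤ ℓ
  injOn : Set.InjOn (fun q : ℕ × ℕ => w q.1 q.2) (Set.Icc 1 ℓ ×ˢ Set.Icc 1 4)
  not_mem_backbone : x ∉ backboneVertexSet ℓ w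
  edgeSet_eq : A.edgeSet = backboneEdgeSet ℓ w ∪ {s(w 1 2, w 1 3)} ∪
    (⋃ j ∈ Set.Icc 1 4, {s(w 1 j, x)}) ∪ ⋃ i ∈ Set.Icc 1 (ℓ - 1), EU i
  isSquarePathConn : ∀ i ∈ Set.Icc 1 (ℓ - 1),
    IsSquarePathConn A (w i 3) (w i 4) (w (i + 1) 1) (w (i + 1) 2) (SU i) (EU i)
  disjoint : ∀ i ∈ Set.Icc 1 (ℓ - 1), ∀ j ∈ Set.Icc 1 (ℓ - 1), i ≠ j → Disjoint (SU i) (SU j)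
  inter_backbone : ∀ i ∈ Set.Icc 1 (ℓ - 1),
    SU i ∩ backboneVertexSet ℓ w = {w i 3, w i 4, w (i + 1) 1, w (i + 1) 2}
  not_mem_path : ∀ i ∈ Set.Icc 1 (ℓ - 1), x ∉ SU i

namespace IsAbsorberGraph

variable {x : V} {A : SimpleGraph V} {SU : ℕ → Set V} {EU : ℕ → Set (Sym2 V)}

theorem backboneEdgeSet_subset (h : IsAbsorberGraph ℓ w x A SU EU) :
    backboneEdgeSet ℓ w ⊆ A.edgeSet := by
  rw [h.edgeSet_eq]
  exact Set.subset_union_left.trans <| Set.subset_union_left.trans Set.subset_union_left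

theorem adj_x (h : IsAbsorberGraph ℓ w x A SU EU) {j : ℕ} (hj : j ∈ Set.Icc 1 4) :
    A.Adj (w 1 j) x := by
  rw [← mem_edgeSet, h.edgeSet_eq]
  exact Or.inl <| Or.inr <| Set.mem_biUnion hj rfl

theorem adj_w12_w13 (h : IsAbsorberGraph ℓ w x A SU EU) : A.Adj (w 1 2) (w 1 3) := by
  rw [← mem_edgeSet, h.edgeSet_eq]
  exact Or.inl <| Or.inl <| Or.inr rfl

theorem x_ne (h : IsAbsorberGraph ℓ w x A SU EU) {a b : ℕ} (ha : a ∈ Set.Icc 1 ℓ)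
    (hb : b ∈ Set.Icc 1 4) : x ≠ w a b :=
  fun hx => h.not_mem_backbone ⟨a, ha, b, hb, hx⟩

theorem eq_of_w_mem (h : IsAbsorberGraph ℓ w x A SU EU) {i a b : ℕ}
    (hi : i ∈ Set.Icc 1 (ℓ - 1)) (ha : a ∈ Set.Icc 1 ℓ) (hb : b ∈ Set.Icc 1 4)
    (hmem : w a b ∈ SU i) :
    (a, b) = (i, 3) ∨ (a, b) = (i, 4) ∨ (a, b) = (i + 1, 1) ∨ (a, b) = (i + 1, 2) := by
  have hmem' : w a b ∈ SU i ∩ backboneVertexSet ℓ w := ⟨hmem, a, ha, b, hb, rfl⟩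
  rw [h.inter_backbone i hi] at hmem'
  have hab := Set.mk_mem_prod ha hb
  have hi₀ : i ∈ Set.Icc 1 ℓ := ⟨hi.1, by grind⟩
  have hi₁ : i + 1 ∈ Set.Icc 1 ℓ := ⟨by omega, by grind⟩
  rcases hmem' with e | e | e | e
  · exact .inl <| h.injOn hab (Set.mk_mem_prod hi₀ (by simp)) e
  · exact .inr <| .inl <| h.injOn hab (Set.mk_mem_prod hi₀ (by simp)) e
  · exact .inr <| .inr <| .inl <| h.injOn hab (Set.mk_mem_prod hi₁ (by simp)) e
  · exact .inr <| .inr <| .inr <| h.injOn hab (Set.mk_mem_prod hi₁ (by simp)) e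

theorem not_mem_of_mem_ends_x (h : IsAbsorberGraph ℓ w x A SU EU) :
    ∀ v ∈ [w 1 1, w 1 2, x, w ℓ 3, w ℓ 4], ∀ i ∈ Set.Icc 1 (ℓ - 1), v ∉ SU i := by
  have := h.two_le
  simp only [List.mem_cons, List.not_mem_nil, or_false]
  rintro v (rfl | rfl | rfl | rfl | rfl) i hi hv
  on_goal 3 => exact h.not_mem_path i hi hv
  all_goals
    have := h.eq_of_w_mem hi (by simp; omega) (by simp) hv
    simp only [Prod.mk.injEq] at this
    grind

theorem nodup_ends_x (h : IsAbsorberGraph ℓ w x A SU EU) :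
    [w 1 1, w 1 2, x, w ℓ 3, w ℓ 4].Nodup := by
  have := h.two_le
  have hmem : ∀ p ∈ [(1, 1), (1, 2), (ℓ, 3), (ℓ, 4)], p ∈ Set.Icc 1 ℓ ×ˢ Set.Icc 1 4 := by
    simpa using by omega
  have hw := (show [(1, 1), (1, 2), (ℓ, 3), (ℓ, 4)].Nodup by simp).map_on
    fun p hp q hq e => h.injOn (hmem p hp) (hmem q hq) e
  have hx : ∀ p ∈ [(1, 1), (1, 2), (ℓ, 3), (ℓ, 4)], x ≠ w p.1 p.2 :=
    fun p hp => h.x_ne (hmem p hp).1 (hmem p hp).2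
  simp only [List.map_cons, List.map_nil] at hw
  simp only [List.forall_mem_cons, List.not_mem_nil, IsEmpty.forall_iff, implies_true] at hx
  simp only [List.nodup_cons, List.mem_cons, List.not_mem_nil] at hw ⊢
  grind

theorem backboneVertexSet_union_eq (h : IsAbsorberGraph ℓ w x A SU EU) :
    backboneVertexSet ℓ w ∪ ⋃ i ∈ Set.Icc 1 (ℓ - 1), SU i =
      {w 1 1, w 1 2, w ℓ 3, w ℓ 4} ∪ ⋃ i ∈ Set.Icc 1 (ℓ - 1), SU i := by
  have := h.two_le
  have hsub : ∀ k ∈ Set.Icc 1 (ℓ - 1), {w k 3, w k 4, w (k + 1) 1, w (k + 1) 2} ⊆ SU k :=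
    fun k hk => (h.inter_backbone k hk).symm.subset.trans Set.inter_subset_left
  refine (Set.union_subset ?_ Set.subset_union_right).antisymm
    (Set.union_subset_union_left _ ?_)
  · rintro _ ⟨i, ⟨hi₁, hi₂⟩, j, ⟨hj₁, hj₂⟩, rfl⟩
    by_cases hc : (i = 1 ∧ j ≤ 2) ∨ (i = ℓ ∧ 3 ≤ j)
    · left
      rcases hc with ⟨rfl, _⟩ | ⟨rfl, _⟩ <;> interval_cases j <;> simp
    right
    obtain hj | hj : j ≤ 2 ∨ 3 ≤ j := by omega
    · obtain ⟨k, rfl⟩ : ∃ k, i = k + 1 := ⟨i - 1, by omega⟩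
      exact Set.mem_biUnion ⟨by omega, by omega⟩
        (hsub k ⟨by omega, by omega⟩ (by interval_cases j <;> simp))
    · exact Set.mem_biUnion ⟨hi₁, by omega⟩
        (hsub i ⟨hi₁, by omega⟩ (by interval_cases j <;> simp))
  · simp only [Set.insert_subset_iff, Set.singleton_subset_iff]
    exact ⟨⟨1, by simp; omega, 1, by simp, rfl⟩, ⟨1, by simp; omega, 2, by simp, rfl⟩,
      ⟨ℓ, by simp; omega, 3, by simp, rfl⟩, ⟨ℓ, by simp; omega, 4, by simp, rfl⟩⟩

theorem exists_squareWalks (h : IsAbsorberGraph ℓ w x A SU EU) :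
    ∃ P : ℕ → List V, ∀ i ∈ Set.Icc 1 (ℓ - 1),
      A.IsSquareWalkBetween (w i 3) (w i 4) (w (i + 1) 1) (w (i + 1) 2) (P i) ∧
        (P i).Nodup ∧ {v | v ∈ P i} = SU i := by
  choose! P hP using fun i hi => exists_isSquarePathConn_iff.1 ⟨_, h.isSquarePathConn i hi⟩
  exact ⟨P, fun i hi => ⟨(hP i hi).1, (hP i hi).2.2⟩⟩

theorem nodup_flatten_and_mem_iff (h : IsAbsorberGraph ℓ w x A SU EU) {Q : ℕ → List V}
    (hQ : ∀ i ∈ Set.Icc 1 (ℓ - 1), (Q i).Nodup ∧ {v | v ∈ Q i} = SU i) :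
    ((List.range' 1 (ℓ - 1)).map Q).flatten.Nodup ∧
      ∀ v, v ∈ ((List.range' 1 (ℓ - 1)).map Q).flatten ↔ ∃ i ∈ Set.Icc 1 (ℓ - 1), v ∈ SU i := by
  have hmem : ∀ i ∈ Set.Icc 1 (ℓ - 1), ∀ v, v ∈ Q i ↔ v ∈ SU i :=
    fun i hi v => Set.ext_iff.1 (hQ i hi).2 v
  refine ⟨List.nodup_flatten_map_range' (fun i hi => (hQ i hi).1) fun i hi j hj hij v hvi hvj =>
    Set.disjoint_left.1 (h.disjoint i hi j hj hij) ((hmem i hi v).1 hvi) ((hmem j hj v).1 hvj),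
    fun v => ?_⟩
  simp only [List.mem_flatten, List.mem_map, List.mem_range'_1]
  constructor
  · rintro ⟨_, ⟨i, hi, rfl⟩, hv⟩
    exact ⟨i, ⟨hi.1, by omega⟩, (hmem i ⟨hi.1, by omega⟩ v).1 hv⟩
  · rintro ⟨i, hi, hv⟩
    exact ⟨Q i, ⟨i, ⟨hi.1, by grind⟩, rfl⟩, (hmem i hi v).2 hv⟩

theorem nodup_append_append_ends (h : IsAbsorberGraph ℓ w x A SU EU) {pre M : List V}
    (hpre : (pre ++ [w ℓ 3, w ℓ 4]).Sublist [w 1 1, w 1 2, x, w ℓ 3, w ℓ 4]) (hM : M.Nodup)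
    (hMmem : ∀ v ∈ M, ∃ i ∈ Set.Icc 1 (ℓ - 1), v ∈ SU i) :
    (pre ++ M ++ [w ℓ 3, w ℓ 4]).Nodup := by
  rw [List.append_assoc, (List.perm_append_comm.append_left pre).nodup_iff, ← List.append_assoc,
    List.nodup_append]
  refine ⟨h.nodup_ends_x.sublist hpre, hM, fun a ha b hb hab => ?_⟩
  obtain ⟨i, hi, hbi⟩ := hMmem b hb
  exact h.not_mem_of_mem_ends_x a (hpre.subset ha) i hi (hab ▸ hbi)

theorem exists_squareWalk_with_x (h : IsAbsorberGraph ℓ w x A SU EU) :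
    ∃ l, A.IsSquareWalkBetween (w 1 1) (w 1 2) (w ℓ 3) (w ℓ 4) l ∧ 4 ≤ l.length ∧ l.Nodup ∧
      {v | v ∈ l} = backboneVertexSet ℓ w ∪ {x} ∪ ⋃ i ∈ Set.Icc 1 (ℓ - 1), SU i := by
  have h2 := h.two_le
  obtain ⟨P, hP⟩ := h.exists_squareWalks
  obtain ⟨hMnd, hMmem⟩ := h.nodup_flatten_and_mem_iff fun i hi => (hP i hi).2
  have hM : A.IsSquareWalkBetween (w 1 3) (w 1 4) (w ℓ 1) (w ℓ 2)
      ((List.range' 1 (ℓ - 1)).map P).flatten := by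
    have := isSquareWalkBetween_flatten_map_range' (G := A) (s₁ := (w · 3)) (s₂ := (w · 4))
      (e₁ := fun i => w (i + 1) 1) (e₂ := fun i => w (i + 1) 2) (by omega : 1 ≤ ℓ - 1)
      (fun i hi => (hP i hi).1) fun i hi => isSquareWalk_of_sq4_subset <|
        (sq4_row_subset_backboneEdgeSet ⟨by grind, by grind⟩).trans h.backboneEdgeSet_subset
    rwa [Nat.sub_add_cancel (by omega)] at this
  have hx : ∀ j ∈ Set.Icc 1 4, A.Adj (w 1 j) x := fun j hj => h.adj_x hj
  have h12 := A.mem_edgeSet.1 (h.backboneEdgeSet_subset mem_backboneEdgeSet_first_pair)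
  have h34 := A.mem_edgeSet.1 (h.backboneEdgeSet_subset mem_backboneEdgeSet_second_pair)
  have hpre : A.IsSquareWalkBetween (w 1 1) (w 1 2) (w 1 2) x [w 1 1, w 1 2, x] :=
    ⟨by simp [hx, h12], ⟨[x], rfl⟩, [w 1 1], rfl⟩
  have hjoin : A.IsSquareWalk [w 1 2, x, w 1 3, w 1 4] := by
    simp [hx, h.adj_w12_w13, (hx _ _).symm, h34]
  have hlast := (sq4_row_subset_backboneEdgeSet ⟨h2, le_rfl⟩).trans h.backboneEdgeSet_subset
  refine ⟨[w 1 1, w 1 2, x] ++ _ ++ [w ℓ 3, w ℓ 4], (hpre.append hM hjoin).append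
    (isSquareWalkBetween_pair (A.mem_edgeSet.1 (hlast (by simp [sq4]))))
    (isSquareWalk_of_sq4_subset hlast), by simp,
    h.nodup_append_append_ends (List.Sublist.refl _) hMnd fun v hv => (hMmem v).1 hv, ?_⟩
  rw [Set.union_right_comm, h.backboneVertexSet_union_eq]
  ext v
  simp [hMmem]
  aesop

theorem exists_squareWalk_without_x (h : IsAbsorberGraph ℓ w x A SU EU) :
    ∃ l, A.IsSquareWalkBetween (w 1 1) (w 1 2) (w ℓ 3) (w ℓ 4) l ∧ 4 ≤ l.length ∧ l.Nodup ∧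
      {v | v ∈ l} = (backboneVertexSet ℓ w ∪ {x} ∪ ⋃ i ∈ Set.Icc 1 (ℓ - 1), SU i) \ {x} := by
  have h2 := h.two_le
  obtain ⟨P, hP⟩ := h.exists_squareWalks
  obtain ⟨hMnd, hMmem⟩ := h.nodup_flatten_and_mem_iff (Q := fun i => (P i).reverse)
    fun i hi => by simpa using (hP i hi).2
  have hM : A.IsSquareWalkBetween (w 2 2) (w 2 1) (w (ℓ - 1) 4) (w (ℓ - 1) 3)
      ((List.range' 1 (ℓ - 1)).map fun i => (P i).reverse).flatten :=
    isSquareWalkBetween_flatten_map_range' (G := A) (s₁ := fun i => w (i + 1) 2)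
      (s₂ := fun i => w (i + 1) 1) (e₁ := (w · 4)) (e₂ := (w · 3)) (by omega : 1 ≤ ℓ - 1)
      (fun i hi => (hP i hi).1.reverse) fun i hi => isSquareWalk_of_sq4_subset <|
        (sq4_cross_subset_backboneEdgeSet ⟨hi.1, by grind⟩).trans h.backboneEdgeSet_subset
  have h12 := A.mem_edgeSet.1 (h.backboneEdgeSet_subset mem_backboneEdgeSet_first_pair)
  have hfirst := sq4_first_subset_backboneEdgeSet.trans h.backboneEdgeSet_subset
  have hlast := sq4_last_subset_backboneEdgeSet.trans h.backboneEdgeSet_subset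
  refine ⟨[w 1 1, w 1 2] ++ _ ++ [w ℓ 3, w ℓ 4],
    ((isSquareWalkBetween_pair h12).append hM (isSquareWalk_of_sq4_subset hfirst)).append
      (isSquareWalkBetween_pair (A.mem_edgeSet.1 (hlast (by simp [sq4]))))
      (isSquareWalk_of_sq4_subset hlast), by simp,
    h.nodup_append_append_ends (by simp) hMnd fun v hv => (hMmem v).1 hv, ?_⟩
  have hx : x ∉ {w 1 1, w 1 2, w ℓ 3, w ℓ 4} ∪ ⋃ i ∈ Set.Icc 1 (ℓ - 1), SU i := by
    have := h.nodup_ends_x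
    simp only [List.nodup_cons, List.mem_cons] at this
    simp only [Set.mem_union, Set.mem_insert_iff, Set.mem_iUnion, not_or]
    exact ⟨by tauto, fun ⟨i, hi, hxi⟩ => h.not_mem_path i hi hxi⟩
  rw [Set.union_right_comm, h.backboneVertexSet_union_eq, Set.union_sdiff_right,
    Set.sdiff_singleton_eq_self hx]
  ext v
  simp [hMmem]
  aesop

end IsAbsorberGraph

end Backbone

/-- The single-vertex absorber: a backbone-path `B_ℓ` with vertices `w i j`, an extra vertex
`x` joined to the four vertices `w 1 j` together with the edge `{w 1 2, w 1 3}`, and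
square-paths `U_i` connecting `w_iᵇ` to `w_{i+1}ᵃ`, is an
`((w 1 1, w 1 2), (w ℓ 3, w ℓ 4), {x})`-absorber: for every `X' ⊆ {x}` it contains a
square-path connecting `(w 1 1, w 1 2)` to `(w ℓ 3, w ℓ 4)` with vertex set exactly
`V(A_x) \ X'`. -/
theorem statement_10 {V : Type*} (ℓ : ℕ) (hℓ : 2 ≤ ℓ)
    (w : ℕ → ℕ → V) (x : V) (A : SimpleGraph V)
    (SU : ℕ → Set V) (EU : ℕ → Set (Sym2 V))
    (hw : Set.InjOn (fun q : ℕ × ℕ => w q.1 q.2) (Set.Icc 1 ℓ ×ˢ Set.Icc 1 4))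
    (hx : x ∉ {v : V | ∃ i ∈ Set.Icc 1 ℓ, ∃ j ∈ Set.Icc 1 4, v = w i j})
    (hAedges : A.edgeSet = backboneEdgeSet ℓ w ∪ {s(w 1 2, w 1 3)} ∪
      (⋃ j ∈ Set.Icc 1 4, {s(w 1 j, x)}) ∪ ⋃ i ∈ Set.Icc 1 (ℓ - 1), EU i)
    (hU : ∀ i ∈ Set.Icc 1 (ℓ - 1),
      IsSquarePathConn A (w i 3) (w i 4) (w (i + 1) 1) (w (i + 1) 2) (SU i) (EU i))
    (hUdisj : ∀ i ∈ Set.Icc 1 (ℓ - 1), ∀ j ∈ Set.Icc 1 (ℓ - 1), i ≠ j →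
      Disjoint (SU i) (SU j))
    (hUB : ∀ i ∈ Set.Icc 1 (ℓ - 1),
      SU i ∩ {v : V | ∃ i' ∈ Set.Icc 1 ℓ, ∃ j ∈ Set.Icc 1 4, v = w i' j} =
        {w i 3, w i 4, w (i + 1) 1, w (i + 1) 2})
    (hxU : ∀ i ∈ Set.Icc 1 (ℓ - 1), x ∉ SU i) :
    ∀ X' ⊆ ({x} : Set V), ∃ E : Set (Sym2 V),
      IsSquarePathConn A (w 1 1) (w 1 2) (w ℓ 3) (w ℓ 4)
        (({v : V | ∃ i ∈ Set.Icc 1 ℓ, ∃ j ∈ Set.Icc 1 4, v = w i j} ∪ {x} ∪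
          ⋃ i ∈ Set.Icc 1 (ℓ - 1), SU i) \ X') E := by
  have h : IsAbsorberGraph ℓ w x A SU EU := ⟨hℓ, hw, hx, hAedges, hU, hUdisj, hUB, hxU⟩
  intro X' hX'
  rcases Set.subset_singleton_iff_eq.1 hX' with rfl | rfl
  · rw [Set.sdiff_empty]
    exact exists_isSquarePathConn_iff.2 h.exists_squareWalk_with_x
  · exact exists_isSquarePathConn_iff.2 h.exists_squareWalk_without_x
end

section
/- For every α ∈ (0,1) there exist ε > 0 and n₀ ∈ ℕ such that the following holds in the standing setting (for this ε and any n ≥ n₀). If |F₁₂| ≥ ε⁻⁵·ñ·log n and deg_{F₁₂}(v, W₁) ≥ ε⁻⁴·log n/p for all v ∈ U, then e_{F₂₃}(U, W₃ \ X) ≥ (α·ñ·p/4)·|U|. -/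
open SimpleGraph

/-- `deg_H(v, W)`: number of neighbours of `v` in `H` that lie in `W`. -/
noncomputable def degIn {V : Type*} (H : SimpleGraph V) (v : V) (W : Set V) : ℕ :=
  (H.neighborSet v ∩ W).ncard

/-- `deg_H(v)`: degree of `v` in `H`. -/
noncomputable def degOf {V : Type*} (H : SimpleGraph V) (v : V) : ℕ :=
  (H.neighborSet v).ncard

/-- `e_H(X, Y)`: number of edges of `H` with one endpoint in `X` and the other in `Y`. -/
noncomputable def eGraph {V : Type*} (H : SimpleGraph V) (X Y : Set V) : ℕ :=
  {e ∈ H.edgeSet | ∃ x ∈ X, ∃ y ∈ Y, e = s(x, y)}.ncard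

/-- `e_F(X, Y)` for an edge set `F`: number of edges of `F` with one endpoint in `X` and the
other in `Y`. -/
noncomputable def eF {V : Type*} (F : Set (Sym2 V)) (X Y : Set V) : ℕ :=
  {e ∈ F | ∃ x ∈ X, ∃ y ∈ Y, e = s(x, y)}.ncard

/-- `deg_F(v, W)`: number of edges of `F` joining `v` to a vertex of `W`. -/
noncomputable def degF {V : Type*} (F : Set (Sym2 V)) (v : V) (W : Set V) : ℕ :=
  {e ∈ F | ∃ w ∈ W, e = s(v, w)}.ncard

/-- `deg_F(v)`: number of edges of `F` incident to `v`. -/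
noncomputable def degFtot {V : Type*} (F : Set (Sym2 V)) (v : V) : ℕ :=
  {e ∈ F | v ∈ e}.ncard

/-- `G ∈ 𝒢(Γ, n, β, p)`: spanning subgraphs of `Γ` with minimum degree at least
`(2/3 + β) n p` in which every edge lies on at least `β n p²` triangles. -/
def MemFamily (n : ℕ) (Γ G : SimpleGraph (Fin n)) (β p : ℝ) : Prop :=
  G ≤ Γ ∧ (∀ v : Fin n, ((2 : ℝ) / 3 + β) * n * p ≤ (degOf G v : ℝ)) ∧
    ∀ u v : Fin n, G.Adj u v →
      β * n * p ^ 2 ≤ (((G.neighborSet u ∩ G.neighborSet v).ncard : ℝ))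

/-- `W` is `(α, ε, p)`-good (with respect to `Γ` and `G ⊆ Γ`): properties (G1)–(G7). -/
def IsGood (n : ℕ) (Γ G : SimpleGraph (Fin n)) (α ε p : ℝ) (W : Set (Fin n)) : Prop :=
  -- (G1)
  (∀ X Y : Set (Fin n), X ⊆ W → Disjoint X Y →
    (ε ^ (-3 : ℤ) * Real.log n / p ≤ (X.ncard : ℝ)) →
    (ε ^ (-3 : ℤ) * Real.log n / p ≤ (Y.ncard : ℝ)) →
    (1 - ε) * X.ncard * Y.ncard * p ≤ (eGraph Γ X Y : ℝ) ∧
      (eGraph Γ X Y : ℝ) ≤ (1 + ε) * X.ncard * Y.ncard * p) ∧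
  -- (G2)
  (∀ v : Fin n, (1 - ε) * W.ncard * p ≤ (degIn Γ v W : ℝ) ∧
    (degIn Γ v W : ℝ) ≤ (1 + ε) * W.ncard * p) ∧
  -- (G3)
  (∀ v : Fin n, (1 - ε) * (degOf G v : ℝ) * W.ncard / n ≤ (degIn G v W : ℝ) ∧
    (degIn G v W : ℝ) ≤ (1 + ε) * (degOf G v : ℝ) * W.ncard / n) ∧
  -- (G4)
  (∀ v : Fin n, ((2 : ℝ) / 3 + α) * W.ncard * p ≤ (degIn G v W : ℝ)) ∧
  -- (G5)
  (∀ u v : Fin n, G.Adj u v →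
    α * W.ncard * p ^ 2 ≤ (((G.neighborSet u ∩ G.neighborSet v ∩ W).ncard : ℝ))) ∧
  -- (G6)
  (∀ W' : Set (Fin n), W' ⊆ W → (ε * W.ncard ≤ (W'.ncard : ℝ)) →
    ∀ P : Finset (Sym2 (Fin n)),
      (∀ e ∈ P, ¬ e.IsDiag ∧ ∀ x ∈ e, x ∉ W) →
      (ε ^ (-10 : ℤ) * Real.log n / p ^ 2 ≤ (P.card : ℝ)) →
      (∀ v : Fin n, ({e : Sym2 (Fin n) | e ∈ P ∧ v ∈ e}.ncard : ℝ) ≤ 1 + 1 / p) →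
      (∑ e ∈ P, ({w : Fin n | w ∈ W' ∧ ∀ x ∈ e, G.Adj x w}.ncard : ℝ)) ≤
        (1 + ε) * P.card * W'.ncard * p ^ 2) ∧
  -- (G7)
  (∀ P : Finset (Sym2 (Fin n)), (↑P : Set (Sym2 (Fin n))) ⊆ G.edgeSet →
    (∀ e ∈ P, ∀ x ∈ e, x ∉ W) →
    ((P.card : ℝ) ≤ 1 + ε / p ^ 2) →
    (∀ v : Fin n, ({e : Sym2 (Fin n) | e ∈ P ∧ v ∈ e}.ncard : ℝ) ≤ 1 + ε / p) →
    α * P.card * W.ncard * p ^ 2 ≤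
      (((⋃ e ∈ P, {w : Fin n | w ∈ W ∧ ∀ x ∈ e, G.Adj x w})).ncard : ℝ))

/-- `U`: the set of vertices of `W₂` incident to an edge of `F₁₂`. -/
def Uset {V : Type*} (F₁₂ : Set (Sym2 V)) (W₂ : Set V) : Set V :=
  {v ∈ W₂ | ∃ e ∈ F₁₂, v ∈ e}

/-- `F₂₃`: the edges of `G` between `W₂` and `W₃` extending an edge of `F₁₂` via a
triangle. -/
def F23 {V : Type*} (G : SimpleGraph V) (F₁₂ : Set (Sym2 V)) (W₁ W₂ W₃ : Set V) :
    Set (Sym2 V) :=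
  {e | ∃ w₂ ∈ W₂, ∃ w₃ ∈ W₃, e = s(w₂, w₃) ∧ G.Adj w₂ w₃ ∧
    ∃ w₁ ∈ W₁, s(w₁, w₂) ∈ F₁₂ ∧ G.Adj w₁ w₃}

/-!
For `u ∈ U` let `D(u) = N_{F₁₂}(u, W₁)`. By (G5) in `W₃`, each `w ∈ D(u)` has `α ñ p²` common
`G`-neighbours with `u` in `W₃`, and each of them lies in `X` or in the `F₂₃`-neighbourhood
`Y(u)` of `u` in `W₃ \ X`. Counting these as `Γ`-edges from `D(u)` and applying (G1) in `W₁` gives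
`α ñ p ≤ (1 + ε)(|Y(u)| + |N_Γ(u) ∩ X| + N)`, where `N ≈ ε⁻³ log n / p` is the cost of padding the
second set up to the size that (G1) requires. Summing over `U`, the `X`-part is at most
`e_Γ(U, X) ≲ ε⁴ ñ p |U|` by (G1) in `W₂`, which applies because (G2) forces
`|U| ≥ |F₁₂| / ((1 + ε) ñ p) ≥ ε⁻³ log n / p`. With `ε = α / 100` all error terms are absorbed.
-/

section EdgeCounting

variable {V : Type*}

def nbrF (F : Set (Sym2 V)) (u : V) (W : Set V) : Set V :=
  {w | w ∈ W ∧ s(u, w) ∈ F}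

lemma degF_eq_ncard_nbrF (F : Set (Sym2 V)) (u : V) (W : Set V) :
    degF F u W = (nbrF F u W).ncard := by
  have : {e ∈ F | ∃ w ∈ W, e = s(u, w)} = (fun w => s(u, w)) '' nbrF F u W := by
    ext e
    constructor
    · rintro ⟨heF, w, hw, rfl⟩
      exact ⟨w, ⟨hw, heF⟩, rfl⟩
    · rintro ⟨w, ⟨hw, hwF⟩, rfl⟩
      exact ⟨hwF, w, hw, rfl⟩
  rw [degF, this, Set.ncard_image_of_injective _ fun _ _ => Sym2.congr_right.mp]

variable [Finite V]

lemma degF_le_degIn {F : Set (Sym2 V)} {H : SimpleGraph V} (hF : F ⊆ H.edgeSet) (u : V)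
    (W : Set V) : degF F u W ≤ degIn H u W := by
  rw [degF_eq_ncard_nbrF, degIn, Set.inter_comm]
  exact Set.ncard_le_ncard (fun w hw => ⟨hw.1, hF hw.2⟩)

lemma eF_mono_right (F : Set (Sym2 V)) (A : Set V) {B B' : Set V} (h : B ⊆ B') :
    eF F A B ≤ eF F A B' :=
  Set.ncard_le_ncard fun _ ⟨heF, x, hx, y, hy, he⟩ => ⟨heF, x, hx, y, h hy, he⟩

lemma sum_ncard_nbrF_le_eF (F : Set (Sym2 V)) {A : Finset V} {B : Set V}
    (hAB : Disjoint (A : Set V) B) :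
    ∑ u ∈ A, (nbrF F u B).ncard ≤ eF F A B := by
  have hdisj : (A : Set V).PairwiseDisjoint fun u => (fun w => s(u, w)) '' nbrF F u B := by
    rintro u hu u' hu' hne
    refine Set.disjoint_left.mpr ?_
    rintro _ ⟨w, hw, rfl⟩ ⟨w', hw', he⟩
    rcases Sym2.eq_iff.mp he with ⟨rfl, -⟩ | ⟨rfl, -⟩
    · exact hne rfl
    · exact Set.disjoint_left.mp hAB hu' hw.1
  calc ∑ u ∈ A, (nbrF F u B).ncard
      = ∑ u ∈ A, ((fun w => s(u, w)) '' nbrF F u B).ncard := by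
        refine Finset.sum_congr rfl fun u _ => ?_
        rw [Set.ncard_image_of_injective _ fun _ _ => Sym2.congr_right.mp]
    _ = (⋃ u ∈ (A : Set V), (fun w => s(u, w)) '' nbrF F u B).ncard := by
        rw [A.finite_toSet.ncard_biUnion (fun _ _ => Set.toFinite _) hdisj,
          finsum_mem_coe_finset]
    _ ≤ eF F A B := by
        refine Set.ncard_le_ncard ?_
        simp only [Set.subset_def, Set.mem_iUnion, Set.mem_image]
        rintro _ ⟨u, hu, w, hw, rfl⟩
        exact ⟨hw.2, u, hu, w, hw.1, rfl⟩

lemma ncard_le_sum_degF {F : Set (Sym2 V)} {A B : Set V} {U : Finset V} (hU : ↑U = Uset F B)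
    (hF : ∀ e ∈ F, ∃ a ∈ A, ∃ b ∈ B, e = s(a, b)) :
    F.ncard ≤ ∑ u ∈ U, degF F u A := by
  calc F.ncard ≤ (⋃ u ∈ U, {e ∈ F | ∃ a ∈ A, e = s(u, a)}).ncard := by
        refine Set.ncard_le_ncard fun e he => ?_
        obtain ⟨a, ha, b, hb, rfl⟩ := hF e he
        have hbU : b ∈ U := by
          rw [← Finset.mem_coe, hU]
          exact ⟨hb, _, he, Sym2.mem_mk_right a b⟩
        exact Set.mem_biUnion hbU ⟨he, a, ha, Sym2.eq_swap⟩
    _ ≤ ∑ u ∈ U, degF F u A := U.set_ncard_biUnion_le _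

lemma exists_superset_ncard_between {S W : Set V} (hSW : S ⊆ W) {N : ℕ} (hN : N ≤ W.ncard) :
    ∃ S', S ⊆ S' ∧ S' ⊆ W ∧ N ≤ S'.ncard ∧ S'.ncard ≤ S.ncard + N := by
  obtain ⟨S', hSS', hS'W, hcard⟩ := Set.exists_subsuperset_card_eq hSW (le_max_left _ N)
    (max_le (Set.ncard_le_ncard hSW) hN)
  exact ⟨S', hSS', hS'W, hcard ▸ le_max_right _ _, hcard ▸ max_le (by omega) (by omega)⟩

end EdgeCounting

section GoodSets

variable {n : ℕ} {Γ G : SimpleGraph (Fin n)} {α ε p : ℝ}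

lemma IsGood.eGraph_le {W W' A S : Set (Fin n)} (hW : IsGood n Γ G α ε p W) (hε : 0 ≤ ε)
    (hp : 0 ≤ p) (hAW : A ⊆ W) (hA : ε ^ (-3 : ℤ) * Real.log n / p ≤ A.ncard)
    (hWW' : Disjoint W W') (hSW' : S ⊆ W') {N : ℕ}
    (hN : ε ^ (-3 : ℤ) * Real.log n / p ≤ N) (hNW' : N ≤ W'.ncard) :
    (eGraph Γ A S : ℝ) ≤ (1 + ε) * A.ncard * (S.ncard + N) * p := by
  obtain ⟨S', hSS', hS'W', hNS', hS'S⟩ := exists_superset_ncard_between hSW' hNW'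
  have hG1 := (hW.1 A S' hAW (hWW'.mono hAW hS'W') hA (hN.trans (by exact_mod_cast hNS'))).2
  calc (eGraph Γ A S : ℝ) ≤ eGraph Γ A S' := by exact_mod_cast eF_mono_right _ A hSS'
    _ ≤ (1 + ε) * A.ncard * S'.ncard * p := hG1
    _ ≤ (1 + ε) * A.ncard * (S.ncard + N) * p := by gcongr; exact_mod_cast hS'S

lemma le_ncard_of_commonNeighbors_subset {W₁ W₃ D T : Set (Fin n)} (hGΓ : G ≤ Γ)
    (hW₁ : IsGood n Γ G α ε p W₁) (hW₃ : IsGood n Γ G α ε p W₃) (h13 : Disjoint W₁ W₃)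
    (hε : 0 ≤ ε) (hp : 0 < p) {u : Fin n} (hDW₁ : D ⊆ W₁) (hDu : ∀ w ∈ D, G.Adj u w)
    (hD : ε ^ (-3 : ℤ) * Real.log n / p ≤ D.ncard) (hD0 : 0 < D.ncard)
    (hTW₃ : T ⊆ W₃) (hT : ∀ w ∈ D, ∀ y ∈ W₃, G.Adj u y → G.Adj w y → y ∈ T) {N : ℕ}
    (hN : ε ^ (-3 : ℤ) * Real.log n / p ≤ N) (hNW₃ : N ≤ W₃.ncard) :
    α * W₃.ncard * p ≤ (1 + ε) * (T.ncard + N) := by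
  obtain ⟨D, rfl⟩ := D.toFinite.exists_finset_coe
  rw [Set.ncard_coe_finset] at hD hD0
  have hcommon : ∀ w ∈ D, α * W₃.ncard * p ^ 2 ≤ (nbrF Γ.edgeSet w T).ncard := by
    intro w hw
    have hsub : G.neighborSet u ∩ G.neighborSet w ∩ W₃ ⊆ nbrF Γ.edgeSet w T :=
      fun y ⟨⟨huy, hwy⟩, hy⟩ => ⟨hT w hw y hy huy hwy, hGΓ hwy⟩
    exact (hW₃.2.2.2.2.1 u w (hDu w hw)).trans (by exact_mod_cast Set.ncard_le_ncard hsub)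
  have hcount : (∑ w ∈ D, (nbrF Γ.edgeSet w T).ncard : ℝ) ≤ eGraph Γ D T := by
    exact_mod_cast sum_ncard_nbrF_le_eF Γ.edgeSet (h13.mono hDW₁ hTW₃)
  have hG1 := hW₁.eGraph_le hε hp.le hDW₁ (by rwa [Set.ncard_coe_finset]) h13 hTW₃ hN hNW₃
  rw [Set.ncard_coe_finset] at hG1
  have hDp : (0 : ℝ) < D.card * p := by positivity
  refine le_of_mul_le_mul_left ?_ hDp
  calc D.card * p * (α * W₃.ncard * p) = ∑ _w ∈ D, α * W₃.ncard * p ^ 2 := by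
        rw [Finset.sum_const, nsmul_eq_mul]; ring
    _ ≤ ∑ w ∈ D, ((nbrF Γ.edgeSet w T).ncard : ℝ) := Finset.sum_le_sum hcommon
    _ ≤ (1 + ε) * D.card * (T.ncard + N) * p := hcount.trans hG1
    _ = D.card * p * ((1 + ε) * (T.ncard + N)) := by ring

lemma IsGood.ncard_le_card_mul {W₁ W₂ : Set (Fin n)} {F : Set (Sym2 (Fin n))}
    (hW₁ : IsGood n Γ G α ε p W₁) (hFΓ : F ⊆ Γ.edgeSet)
    (hF : ∀ e ∈ F, ∃ w₁ ∈ W₁, ∃ w₂ ∈ W₂, e = s(w₁, w₂)) {U : Finset (Fin n)}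
    (hU : ↑U = Uset F W₂) :
    (F.ncard : ℝ) ≤ U.card * ((1 + ε) * W₁.ncard * p) := by
  calc (F.ncard : ℝ) ≤ ∑ u ∈ U, (degF F u W₁ : ℝ) := by exact_mod_cast ncard_le_sum_degF hU hF
    _ ≤ ∑ _u ∈ U, (1 + ε) * W₁.ncard * p := by
        refine Finset.sum_le_sum fun u _ => ?_
        exact (Nat.cast_le.mpr (degF_le_degIn hFΓ u W₁)).trans (hW₁.2.1 u).2
    _ = U.card * ((1 + ε) * W₁.ncard * p) := by rw [Finset.sum_const, nsmul_eq_mul]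

lemma le_ncard_nbrF_F23_add {W₁ W₂ W₃ : Set (Fin n)} {F₁₂ : Set (Sym2 (Fin n))} (hGΓ : G ≤ Γ)
    (hW₁ : IsGood n Γ G α ε p W₁) (hW₃ : IsGood n Γ G α ε p W₃) (h13 : Disjoint W₁ W₃)
    (hε : 0 ≤ ε) (hp : 0 < p) (hFG : F₁₂ ⊆ G.edgeSet) {u : Fin n} (hu : u ∈ W₂)
    (hdeg : ε ^ (-3 : ℤ) * Real.log n / p ≤ degF F₁₂ u W₁) (hdeg0 : 0 < degF F₁₂ u W₁)
    {N : ℕ} (hN : ε ^ (-3 : ℤ) * Real.log n / p ≤ N) (hNW₃ : N ≤ W₃.ncard) (X : Set (Fin n)) :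
    α * W₃.ncard * p ≤ (1 + ε) * ((nbrF (F23 G F₁₂ W₁ W₂ W₃) u (W₃ \ X)).ncard +
      (nbrF Γ.edgeSet u X).ncard + N) := by
  set T := nbrF (F23 G F₁₂ W₁ W₂ W₃) u (W₃ \ X) ∪ (nbrF Γ.edgeSet u X ∩ W₃)
  rw [degF_eq_ncard_nbrF] at hdeg hdeg0
  have hT : ∀ w ∈ nbrF F₁₂ u W₁, ∀ y ∈ W₃, G.Adj u y → G.Adj w y → y ∈ T := by
    intro w ⟨hw, huw⟩ y hy huy hwy
    by_cases hyX : y ∈ X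
    · exact Or.inr ⟨⟨hyX, hGΓ huy⟩, hy⟩
    · refine Or.inl ⟨⟨hy, hyX⟩, u, hu, y, hy, rfl, huy, w, hw, ?_, hwy⟩
      rwa [Sym2.eq_swap]
  have hTcard : (T.ncard : ℝ) ≤ (nbrF (F23 G F₁₂ W₁ W₂ W₃) u (W₃ \ X)).ncard +
      (nbrF Γ.edgeSet u X).ncard := by
    exact_mod_cast (Set.ncard_union_le _ _).trans
      (Nat.add_le_add_left (Set.ncard_le_ncard Set.inter_subset_left) _)
  have hTW₃ : T ⊆ W₃ := Set.union_subset (fun y hy => hy.1.1) Set.inter_subset_right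
  refine (le_ncard_of_commonNeighbors_subset hGΓ hW₁ hW₃ h13 hε hp (fun w hw => hw.1)
    (fun w hw => hFG hw.2) hdeg hdeg0 hTW₃ hT hN hNW₃).trans ?_
  exact mul_le_mul_of_nonneg_left (by linarith) (by linarith)

lemma card_mul_le_eF_F23 {W₁ W₂ W₃ X : Set (Fin n)} {F₁₂ : Set (Sym2 (Fin n))}
    {U : Finset (Fin n)} (hGΓ : G ≤ Γ) (hW₁ : IsGood n Γ G α ε p W₁)
    (hW₂ : IsGood n Γ G α ε p W₂) (hW₃ : IsGood n Γ G α ε p W₃) (h13 : Disjoint W₁ W₃)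
    (h23 : Disjoint W₂ W₃) (hε : 0 ≤ ε) (hp : 0 < p) (hFG : F₁₂ ⊆ G.edgeSet)
    (hUW₂ : ↑U ⊆ W₂) (hU : ε ^ (-3 : ℤ) * Real.log n / p ≤ U.card)
    (hthr : 0 < ε ^ (-3 : ℤ) * Real.log n / p)
    (hdeg : ∀ u ∈ U, ε ^ (-3 : ℤ) * Real.log n / p ≤ degF F₁₂ u W₁) {N : ℕ}
    (hN : ε ^ (-3 : ℤ) * Real.log n / p ≤ N) (hNW₃ : N ≤ W₃.ncard) (hXW₃ : X ⊆ W₃) :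
    U.card * (α * W₃.ncard * p) ≤ (1 + ε) * (eF (F23 G F₁₂ W₁ W₂ W₃) U (W₃ \ X) +
      (1 + ε) * U.card * (X.ncard + N) * p + U.card * N) := by
  have hvertex := fun u hu => le_ncard_nbrF_F23_add hGΓ hW₁ hW₃ h13 hε hp hFG (hUW₂ hu)
    (hdeg u hu) (by exact_mod_cast hthr.trans_le (hdeg u hu)) hN hNW₃ X
  have hY : ∑ u ∈ U, ((nbrF (F23 G F₁₂ W₁ W₂ W₃) u (W₃ \ X)).ncard : ℝ) ≤
      eF (F23 G F₁₂ W₁ W₂ W₃) U (W₃ \ X) := by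
    exact_mod_cast sum_ncard_nbrF_le_eF _ (h23.mono hUW₂ (Set.sdiff_subset : W₃ \ X ⊆ W₃))
  have hZ : ∑ u ∈ U, ((nbrF Γ.edgeSet u X).ncard : ℝ) ≤ (1 + ε) * U.card * (X.ncard + N) * p := by
    have hcount : ∑ u ∈ U, ((nbrF Γ.edgeSet u X).ncard : ℝ) ≤ eGraph Γ U X := by
      exact_mod_cast sum_ncard_nbrF_le_eF _ (h23.mono hUW₂ hXW₃)
    simpa only [Set.ncard_coe_finset] using hcount.trans (hW₂.eGraph_le hε hp.le hUW₂
      (by simpa only [Set.ncard_coe_finset] using hU) h23 hXW₃ hN hNW₃)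
  have hsum := Finset.sum_le_sum hvertex
  rw [Finset.sum_const, ← Finset.mul_sum, Finset.sum_add_distrib, Finset.sum_add_distrib,
    Finset.sum_const, nsmul_eq_mul, nsmul_eq_mul] at hsum
  exact hsum.trans (mul_le_mul_of_nonneg_left (by linarith) (by linarith))

end GoodSets

section Arithmetic

lemma one_le_log_of_three_le {n : ℕ} (hn : 3 ≤ n) : 1 ≤ Real.log n := by
  rw [Real.le_log_iff_exp_le (by positivity)]
  exact Real.exp_one_lt_three.le.trans (by exact_mod_cast hn)

variable {ε L p : ℝ}

lemma threshold_add_one_le (hε0 : 0 < ε) (hε1 : ε ≤ 1) (hL : 1 ≤ L) (hp0 : 0 < p) (hp1 : p ≤ 1)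
    {m : ℝ} (hm : ε ^ (-22 : ℤ) * L ^ 2 / p ^ 2 ≤ m) :
    ε ^ (-3 : ℤ) * L / p + 1 ≤ 2 * ε * m * p := by
  have hmp : ε ^ (-21 : ℤ) * L ^ 2 / p ≤ ε * m * p := by
    calc ε ^ (-21 : ℤ) * L ^ 2 / p = ε * (ε ^ (-22 : ℤ) * L ^ 2 / p ^ 2) * p := by
          rw [show (-21 : ℤ) = 1 + -22 by norm_num, zpow_add₀ hε0.ne', zpow_one]
          field_simp
      _ ≤ ε * m * p := by gcongr
  have hzpow : ε ^ (-3 : ℤ) ≤ ε ^ (-21 : ℤ) :=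
    zpow_le_zpow_right_of_le_one₀ hε0 hε1 (by norm_num)
  have hzpow_one : 1 ≤ ε ^ (-21 : ℤ) := one_le_zpow_of_nonpos₀ hε0 hε1 (by norm_num)
  have hLp : 1 ≤ L ^ 2 / p := by rw [le_div_iff₀ hp0]; nlinarith
  have hthr : ε ^ (-3 : ℤ) * L / p ≤ ε ^ (-21 : ℤ) * L ^ 2 / p := by
    gcongr
    nlinarith
  have hone : 1 ≤ ε ^ (-21 : ℤ) * L ^ 2 / p := by
    rw [mul_div_assoc]
    nlinarith
  linarith

lemma exists_nat_threshold (hε0 : 0 < ε) (hε1 : ε ≤ 1 / 2) (hL : 1 ≤ L) (hp0 : 0 < p)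
    (hp1 : p ≤ 1) {m : ℕ} (hm : ε ^ (-22 : ℤ) * L ^ 2 / p ^ 2 ≤ m) :
    ∃ N : ℕ, ε ^ (-3 : ℤ) * L / p ≤ N ∧ (N : ℝ) ≤ 2 * ε * m * p ∧ N ≤ m := by
  have hthr : 0 ≤ ε ^ (-3 : ℤ) * L / p := by positivity
  have hN := (Nat.ceil_lt_add_one hthr).le.trans
    (threshold_add_one_le hε0 (by linarith) hL hp0 hp1 hm)
  refine ⟨_, Nat.le_ceil _, hN, ?_⟩
  have : 2 * ε * p ≤ 1 := by nlinarith
  exact_mod_cast hN.trans (show 2 * ε * m * p ≤ m by nlinarith [Nat.cast_nonneg (α := ℝ) m])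

lemma threshold_le_of_mul_le (hε0 : 0 < ε) (hε1 : ε ≤ 1 / 2) (hL : 0 ≤ L) (hp0 : 0 < p)
    {m k : ℝ} (hm : 0 < m) (h : ε ^ (-5 : ℤ) * m * L ≤ k * ((1 + ε) * m * p)) :
    ε ^ (-3 : ℤ) * L / p ≤ k := by
  have hzpow : 1 + ε ≤ ε ^ (-2 : ℤ) := by
    rw [zpow_neg, zpow_ofNat, ← one_div, le_div_iff₀ (by positivity)]
    nlinarith
  have hzpow_add : ε ^ (-5 : ℤ) = ε ^ (-3 : ℤ) * ε ^ (-2 : ℤ) := by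
    rw [← zpow_add₀ hε0.ne']; norm_num
  rw [div_le_iff₀ hp0]
  have hpos : 0 ≤ ε ^ (-3 : ℤ) * L * m := by positivity
  refine le_of_mul_le_mul_right (a := (1 + ε) * m) ?_ (by positivity)
  calc ε ^ (-3 : ℤ) * L * ((1 + ε) * m) = ε ^ (-3 : ℤ) * L * m * (1 + ε) := by ring
    _ ≤ ε ^ (-3 : ℤ) * L * m * ε ^ (-2 : ℤ) := by gcongr
    _ = ε ^ (-5 : ℤ) * m * L := by rw [hzpow_add]; ring
    _ ≤ k * ((1 + ε) * m * p) := h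
    _ = k * p * ((1 + ε) * m) := by ring

lemma div_four_mul_le_of_mul_le_error {α m k N x E : ℝ} (hε0 : 0 ≤ ε) (hεα : 100 * ε ≤ α)
    (hα1 : α ≤ 1) (hm : 0 ≤ m) (hp0 : 0 ≤ p) (hp1 : p ≤ 1) (hk : 0 ≤ k) (hN0 : 0 ≤ N)
    (hN : N ≤ 2 * ε * m * p) (hx : x ≤ ε ^ 4 * m)
    (h : k * (α * m * p) ≤ (1 + ε) * (E + (1 + ε) * k * (x + N) * p + k * N)) :
    α * m * p / 4 * k ≤ E := by
  have hε1 : ε ≤ 1 / 100 := by linarith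
  set Q := k * (m * p)
  have hQ : 0 ≤ Q := mul_nonneg hk (mul_nonneg hm hp0)
  have hεQ : 0 ≤ ε * Q := mul_nonneg hε0 hQ
  have hxN : (x + N) * p ≤ 3 * ε * (m * p) := by
    have hε4 : ε ^ 4 ≤ ε := pow_le_of_le_one hε0 (by linarith) (by norm_num)
    have : x * p ≤ ε * (m * p) := by
      calc x * p ≤ ε ^ 4 * m * p := by gcongr
        _ ≤ ε * (m * p) := by rw [mul_assoc]; gcongr
    nlinarith
  have hZ : (1 + ε) * k * (x + N) * p ≤ (1 + ε) * (3 * ε * Q) := by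
    calc (1 + ε) * k * (x + N) * p = (1 + ε) * k * ((x + N) * p) := by ring
      _ ≤ (1 + ε) * k * (3 * ε * (m * p)) := by gcongr
      _ = _ := by ring
  have hkN : k * N ≤ 2 * ε * Q := by
    calc k * N ≤ k * (2 * ε * m * p) := by gcongr
      _ = _ := by ring
  have hrest : (1 + ε) * k * (x + N) * p + k * N ≤ 6 * ε * Q := by
    nlinarith [mul_le_mul_of_nonneg_right hε1 hεQ]
  have hE : α * Q ≤ (1 + ε) * E + 7 * ε * Q := by
    have := mul_le_mul_of_nonneg_left hrest (by linarith : (0 : ℝ) ≤ 1 + ε)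
    nlinarith [mul_le_mul_of_nonneg_right hε1 hεQ]
  have hαQ : 0 ≤ α * Q := by nlinarith
  have hQ : α * m * p / 4 * k = α * Q / 4 := by ring
  rw [hQ]
  nlinarith

end Arithmetic

/-- Lemma 2.8(3): under the standing setting, if `|F₁₂| ≥ ε⁻⁵ m log n` and
`deg_{F₁₂}(v, W₁) ≥ ε⁻⁴ log n / p` for all `v ∈ U`, then
`e_{F₂₃}(U, W₃ \ X) ≥ (α m p / 4) |U|`. (Here `m` plays the role of `ñ`.) -/
theorem statement_13 (α : ℝ) (hα0 : 0 < α) (hα1 : α < 1) :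
    ∃ ε : ℝ, 0 < ε ∧ ∃ n₀ : ℕ, ∀ n : ℕ, n₀ ≤ n → ∀ p : ℝ, 0 < p → p < 1 →
    ∀ Γ G : SimpleGraph (Fin n), MemFamily n Γ G (4 * α) p →
    ∀ m : ℕ, (ε ^ (-22 : ℤ) * Real.log n ^ 2 / p ^ 2 ≤ (m : ℝ)) →
    ∀ W₁ W₂ W₃ : Set (Fin n),
      Disjoint W₁ W₂ → Disjoint W₁ W₃ → Disjoint W₂ W₃ →
      IsGood n Γ G α ε p W₁ → IsGood n Γ G α ε p W₂ → IsGood n Γ G α ε p W₃ →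
      W₁.ncard = m → W₂.ncard = m → W₃.ncard = m →
    ∀ X : Set (Fin n), X ⊆ W₃ → ((X.ncard : ℝ) ≤ ε ^ 4 * m) →
    ∀ F₁₂ : Set (Sym2 (Fin n)), F₁₂ ⊆ G.edgeSet →
      (∀ e ∈ F₁₂, ∃ w₁ ∈ W₁, ∃ w₂ ∈ W₂, e = s(w₁, w₂)) →
    (ε ^ (-5 : ℤ) * m * Real.log n ≤ (F₁₂.ncard : ℝ)) →
    (∀ v ∈ Uset F₁₂ W₂, ε ^ (-4 : ℤ) * Real.log n / p ≤ (degF F₁₂ v W₁ : ℝ)) →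
    α * m * p / 4 * (((Uset F₁₂ W₂).ncard : ℝ)) ≤
      (eF (F23 G F₁₂ W₁ W₂ W₃) (Uset F₁₂ W₂) (W₃ \ X) : ℝ) := by
  refine ⟨α / 100, by positivity, 3, ?_⟩
  intro n hn p hp0 hp1 Γ G hmem m hm W₁ W₂ W₃ _ h13 h23 hW₁ hW₂ hW₃ hc₁ _ hc₃
    X hXW₃ hX F₁₂ hFG hFshape hF hdeg
  set ε := α / 100 with hε
  have hε0 : 0 < ε := by positivity
  have hL := one_le_log_of_three_le hn
  have hthr : 0 < ε ^ (-3 : ℤ) * Real.log n / p := by positivity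
  obtain ⟨N, hN, hN2, hNm⟩ := exists_nat_threshold hε0 (by linarith) hL hp0 hp1.le hm
  have hm0 : (0 : ℝ) < m := hthr.trans_le (hN.trans (by exact_mod_cast hNm))
  obtain ⟨U, hU⟩ := (Uset F₁₂ W₂).toFinite.exists_finset_coe
  have hUthr : ε ^ (-3 : ℤ) * Real.log n / p ≤ U.card :=
    threshold_le_of_mul_le hε0 (by linarith) (by linarith) hp0 hm0 <| hF.trans <| by
      simpa only [hc₁] using
        hW₁.ncard_le_card_mul (hFG.trans (edgeSet_subset_edgeSet.mpr hmem.1)) hFshape hU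
  have hdeg' : ∀ u ∈ U, ε ^ (-3 : ℤ) * Real.log n / p ≤ degF F₁₂ u W₁ := fun u hu =>
    (hdeg u (hU ▸ hu)).trans' <| by
      gcongr ?_ * _ / _
      exact zpow_le_zpow_right_of_le_one₀ hε0 (by linarith) (by norm_num)
  have hcount := card_mul_le_eF_F23 hmem.1 hW₁ hW₂ hW₃ h13 h23 hε0.le hp0 hFG
    (hU ▸ fun _ hv => hv.1) hUthr hthr hdeg' hN (hc₃ ▸ hNm) hXW₃
  rw [← hU, Set.ncard_coe_finset]
  exact div_four_mul_le_of_mul_le_error hε0.le (by linarith) hα1.le hm0.le hp0.le hp1.le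
    (by positivity) (by positivity) hN2 hX (by simpa only [hc₃] using hcount)
end
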